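/- arXiv:1202.3621 — 3 statements merged into one kernel-verified Lean document; each statement's English description precedes it below -/
import Mathlib

section
/- Let N be a network and I an influence specification for N. Then N is injective over K_g(N,I) — i.e., N is injective over K_g(N)[v] for every kinetic order v with I(v) = I — if and only if I is sign-nonsingular (SNS). -/
noncomputable section

namespace CRN

variable {n m : ℕ}

/-- The orthogonal complement of a subspace of `Fin n → ℝ` with respect to the
standard scalar product. -/
def orthComp (F : Submodule ℝ (Fin n → ℝ)) : Submodule ℝ (Fin n → ℝ) where
  carrier := {w | ∀ v ∈ F, ∑ i, w i * v i = 0}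
  add_mem' := by
    intro a b ha hb v hv
    have h1 := ha v hv
    have h2 := hb v hv
    have key : ∀ i, (a + b) i * v i = a i * v i + b i * v i := fun i => by
      simp [add_mul]
    calc ∑ i, (a + b) i * v i
        = ∑ i, (a i * v i + b i * v i) := Finset.sum_congr rfl (fun i _ => key i)
      _ = (∑ i, a i * v i) + ∑ i, b i * v i := Finset.sum_add_distrib
      _ = 0 := by rw [h1, h2, add_zero]
  zero_mem' := by
    intro v hv
    simp
  smul_mem' := by
    intro t a ha v hv
    have h1 := ha v hv
    simp only [Set.mem_setOf_eq, Pi.smul_apply, smul_eq_mul]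
    calc ∑ i, t * a i * v i
        = t * ∑ i, a i * v i := by
          rw [Finset.mul_sum]
          exact Finset.sum_congr rfl fun i _ => (mul_assoc _ _ _)
      _ = 0 := by rw [h1, mul_zero]

/-- `ω` is a reduced basis of `F^⊥`: it is a basis of the orthogonal complement of `F`,
`ω i` has `i`-th coordinate `1`, and `j`-th coordinate `0` for every `j < d`, `j ≠ i`. -/
def IsReducedBasis (d : ℕ) (F : Submodule ℝ (Fin n → ℝ)) (ω : Fin d → Fin n → ℝ) : Prop :=
  (∀ i, ω i ∈ orthComp F) ∧
  Submodule.span ℝ (Set.range ω) = orthComp F ∧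
  LinearIndependent ℝ ω ∧
  (∀ (i : Fin d) (j : Fin n), (j : ℕ) = (i : ℕ) → ω i j = 1) ∧
  (∀ (i : Fin d) (j : Fin n), (j : ℕ) < d → (j : ℕ) ≠ (i : ℕ) → ω i j = 0)

/-- The matrix whose top `d` rows are `ω` and whose remaining rows agree with `M`. -/
def tildeMat (d : ℕ) (ω : Fin d → Fin n → ℝ) (M : Matrix (Fin n) (Fin n) ℝ) :
    Matrix (Fin n) (Fin n) ℝ :=
  Matrix.of fun i j => if h : (i : ℕ) < d then ω ⟨(i : ℕ), h⟩ j else M i j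

/-- The stoichiometric matrix: `r`-th column is `y' r - y r`. -/
def stoich (y y' : Fin m → Fin n → ℝ) : Matrix (Fin n) (Fin m) ℝ :=
  Matrix.of fun i r => y' r i - y r i

/-- The stoichiometric subspace: the span of the reaction vectors `y' r - y r`. -/
def stoichSpan (y y' : Fin m → Fin n → ℝ) : Submodule ℝ (Fin n → ℝ) :=
  Submodule.span ℝ (Set.range fun r => (fun i => y' r i - y r i))

/-- The matrix whose `r`-th row is the kinetic-order vector `v r`. -/
def Zmat (v : Fin m → Fin n → ℝ) : Matrix (Fin m) (Fin n) ℝ :=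
  Matrix.of fun r i => v r i

/-- The Jacobian matrix of `f` at `c`. -/
def jac (f : (Fin n → ℝ) → Fin n → ℝ) (c : Fin n → ℝ) : Matrix (Fin n) (Fin n) ℝ :=
  Matrix.of fun i j => fderiv ℝ (fun x => f x i) c (Pi.single j 1)

/-- The species formation rate function of a kinetics `K`. -/
def specForm (y y' : Fin m → Fin n → ℝ) (K : Fin m → (Fin n → ℝ) → ℝ) (c : Fin n → ℝ) :
    Fin n → ℝ :=
  fun i => ∑ r, K r c * (y' r i - y r i)

/-- The power-law rate functions with rate vector `κ` and kinetic order `v`. -/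
def powerLaw (κ : Fin m → ℝ) (v : Fin m → Fin n → ℝ) : Fin m → (Fin n → ℝ) → ℝ :=
  fun r c => κ r * ∏ j, c j ^ v r j

/-- The power-law species formation rate function. -/
def plf (y y' : Fin m → Fin n → ℝ) (κ : Fin m → ℝ) (v : Fin m → Fin n → ℝ) (c : Fin n → ℝ) :
    Fin n → ℝ :=
  fun i => ∑ r, κ r * (∏ j, c j ^ v r j) * (y' r i - y r i)

/-- The extended rate function associated with a reduced basis `ω` and `f`. -/
def tildeF (d : ℕ) (ω : Fin d → Fin n → ℝ) (f : (Fin n → ℝ) → Fin n → ℝ) (c : Fin n → ℝ) :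
    Fin n → ℝ :=
  fun i => if h : (i : ℕ) < d then ∑ j, ω ⟨(i : ℕ), h⟩ j * c j else f c i

/-- The extended rate function with the bottom `s` components negated. -/
def hatF (d : ℕ) (ω : Fin d → Fin n → ℝ) (f : (Fin n → ℝ) → Fin n → ℝ) (c : Fin n → ℝ) :
    Fin n → ℝ :=
  fun i => if h : (i : ℕ) < d then ∑ j, ω ⟨(i : ℕ), h⟩ j * c j else -(f c i)

/-- Membership in the positive orthant. -/
def Pos (c : Fin n → ℝ) : Prop := ∀ i, 0 < c i

/-- The network is injective over the power-law kinetics with fixed kinetic order `v`. -/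
def InjOverPL (y y' : Fin m → Fin n → ℝ) (v : Fin m → Fin n → ℝ) : Prop :=
  ∀ κ : Fin m → ℝ, (∀ r, 0 < κ r) → ∀ a b : Fin n → ℝ, Pos a → Pos b → a ≠ b →
    a - b ∈ stoichSpan y y' → plf y y' κ v a ≠ plf y y' κ v b

/-- An influence specification takes values in `{-1, 0, 1}`. -/
def IsInfluence (I : Fin m → Fin n → ℝ) : Prop := ∀ r i, I r i = -1 ∨ I r i = 0 ∨ I r i = 1

/-- The influence specification associated with a kinetic order `v`. -/
def infOf (v : Fin m → Fin n → ℝ) : Fin m → Fin n → ℝ := fun r i => Real.sign (v r i)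

/-- `v ∈ Σ(I)`: the kinetic order `v` has associated influence specification `I`. -/
def InSigma (I : Fin m → Fin n → ℝ) (v : Fin m → Fin n → ℝ) : Prop :=
  ∀ r i, Real.sign (v r i) = I r i

/-- The partial order `I' ≼ I` on influence specifications. -/
def Preceq (I' I : Fin m → Fin n → ℝ) : Prop :=
  ∀ r i, (I' r i = 1 → I r i = 1) ∧ (I' r i = -1 → I r i = -1)

/-- The matrix `M̃(v)`: top `d` rows `ω`, bottom rows from `A ⬝ Z(v)`. -/
def Mt (y y' : Fin m → Fin n → ℝ) (d : ℕ) (ω : Fin d → Fin n → ℝ)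
    (v : Fin m → Fin n → ℝ) : Matrix (Fin n) (Fin n) ℝ :=
  tildeMat d ω (stoich y y' * Zmat v)

/-- The influence specification `I` has a signed determinant. -/
def SignedDet (y y' : Fin m → Fin n → ℝ) (d : ℕ) (ω : Fin d → Fin n → ℝ)
    (I : Fin m → Fin n → ℝ) : Prop :=
  ∀ v w, InSigma I v → InSigma I w →
    Real.sign (Mt y y' d ω v).det = Real.sign (Mt y y' d ω w).det

/-- The influence specification `I` is sign-nonsingular (SNS). -/
def IsSNS (y y' : Fin m → Fin n → ℝ) (d : ℕ) (ω : Fin d → Fin n → ℝ)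
    (I : Fin m → Fin n → ℝ) : Prop :=
  SignedDet y y' d ω I ∧ ∀ v, InSigma I v → (Mt y y' d ω v).det ≠ 0

/-- `Ω` is an admissible kinetics domain: `ℝ^n_{>0} ⊆ Ω ⊆ ℝ^n_{≥0}`. -/
def KinDom (Ω : Set (Fin n → ℝ)) : Prop :=
  {c : Fin n → ℝ | ∀ i, 0 < c i} ⊆ Ω ∧ Ω ⊆ {c : Fin n → ℝ | ∀ i, 0 ≤ c i}

/-- The rate functions are nonnegative on the domain. -/
def KinNonneg (Ω : Set (Fin n → ℝ)) (K : Fin m → (Fin n → ℝ) → ℝ) : Prop :=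
  ∀ r, ∀ c ∈ Ω, 0 ≤ K r c

/-- `I_r^+ ⊆ supp c`. -/
def PosSupp (I : Fin m → Fin n → ℝ) (r : Fin m) (c : Fin n → ℝ) : Prop :=
  ∀ i, I r i = 1 → c i ≠ 0

/-- The kinetics `K` respects the influence specification `I`. -/
def Respects (Ω : Set (Fin n → ℝ)) (K : Fin m → (Fin n → ℝ) → ℝ)
    (I : Fin m → Fin n → ℝ) : Prop :=
  ∀ c ∈ Ω, ∀ r, (0 < K r c ↔ PosSupp I r c)

/-- The kinetics `K` is strictly monotonic with respect to `I`. -/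
def StrictlyMonotonic (Ω : Set (Fin n → ℝ)) (K : Fin m → (Fin n → ℝ) → ℝ)
    (I : Fin m → Fin n → ℝ) : Prop :=
  Respects Ω K I ∧
  ∀ (r : Fin m) (c d : Fin n → ℝ), c ∈ Ω → d ∈ Ω → PosSupp I r c → PosSupp I r d →
    ∀ i, (∀ j, j ≠ i → c j = d j) →
      ((I r i = 1 → c i < d i → K r c < K r d) ∧
       (I r i = -1 → c i < d i → K r d < K r c) ∧
       (I r i = 0 → K r c = K r d))

/-- The kinetics `K` is differentiable with respect to `I`. -/
def DiffWrt (Ω : Set (Fin n → ℝ)) (K : Fin m → (Fin n → ℝ) → ℝ)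
    (I : Fin m → Fin n → ℝ) : Prop :=
  Respects Ω K I ∧
  (∀ r, ∀ c ∈ Ω, ContinuousWithinAt (K r) Ω c) ∧
  (∀ (r : Fin m) (c : Fin n → ℝ), (∀ i, 0 < c i) → DifferentiableAt ℝ (K r) c) ∧
  (∀ (r : Fin m) (c : Fin n → ℝ), (∀ i, 0 < c i) → ∀ i,
     Real.sign (fderiv ℝ (K r) c (Pi.single i 1)) = I r i)

/-- `a` and `b` are non-overlapping with respect to `I`. -/
def NonOverlap (I : Fin m → Fin n → ℝ) (a b : Fin n → ℝ) : Prop :=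
  ∀ r, ¬ PosSupp I r a → PosSupp I r b

/-- The kinetics `K` is weakly monotonic with respect to `I`. -/
def WeaklyMonotonic (y : Fin m → Fin n → ℝ) (Ω : Set (Fin n → ℝ))
    (K : Fin m → (Fin n → ℝ) → ℝ) (I : Fin m → Fin n → ℝ) : Prop :=
  ∀ a ∈ Ω, ∀ b ∈ Ω, NonOverlap I a b → ∀ r,
    (K r b < K r a → ∃ i, Real.sign (a i - b i) = I r i ∧ I r i ≠ 0) ∧
    (K r a = K r b →
      ((∀ i, y r i ≠ 0 → a i = b i) ∨
        ∃ i j, i ≠ j ∧ Real.sign (a i - b i) = I r i ∧ I r i ≠ 0 ∧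
          Real.sign (a j - b j) = -(I r j) ∧ I r j ≠ 0))

/-- A square real matrix is a P-matrix: all principal minors are positive. -/
def IsPMatrix {N : ℕ} (M : Matrix (Fin N) (Fin N) ℝ) : Prop :=
  ∀ J : Finset (Fin N),
    0 < (M.submatrix (fun i : {x // x ∈ J} => (i : Fin N))
          (fun j : {x // x ∈ J} => (j : Fin N))).det

/-- The minor `det(A_{J,C})` of the stoichiometric matrix. -/
def subDetA (y y' : Fin m → Fin n → ℝ) (s : ℕ) (J : Finset (Fin n)) (C : Finset (Fin m))
    (hJ : J.card = s) (hC : C.card = s) : ℝ :=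
  ((stoich y y').submatrix (fun a => (J.orderIsoOfFin hJ a).1)
    (fun b => (C.orderIsoOfFin hC b).1)).det

/-- The minor `det(Z(v)_{C,J})`. -/
def subDetZ (v : Fin m → Fin n → ℝ) (s : ℕ) (C : Finset (Fin m)) (J : Finset (Fin n))
    (hC : C.card = s) (hJ : J.card = s) : ℝ :=
  ((Zmat v).submatrix (fun a => (C.orderIsoOfFin hC a).1)
    (fun b => (J.orderIsoOfFin hJ b).1)).det

/-- The Hill-type species formation rate function. -/
def hillf (y y' : Fin m → Fin n → ℝ) (κ : Fin m → ℝ) (δ v : Fin m → Fin n → ℝ)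
    (c : Fin n → ℝ) : Fin n → ℝ :=
  fun i => ∑ r, κ r * (∏ j, (c j ^ v r j) / (δ r j + c j ^ v r j)) * (y' r i - y r i)

/-!
Every difference of power-law monomials at positive points is a positive multiple of the
corresponding difference of logarithms: `x - y = L(x, y) (log x - log y)` with `L` the logarithmic
mean. Hence `f_{κ,v}(a) = f_{κ,v}(b)` with `0 ≠ a - b ∈ Γ` says that `A Z(v') (a - b) = 0` for a
kinetic order `v'` obtained from `v` by positive row and column scalings, so `v' ∈ Σ(I)`;
conversely every `ν ∈ Γ` with `A Z(v) ν = 0` arises in this way from suitable `a`, `b`, `κ`.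
Since `ω` is a reduced basis of `Γ^⊥`, these `ν` form exactly the kernel of `M̃(v)`. So injectivity
over `Σ(I)` means that `det M̃` does not vanish on `Σ(I)`, and as `Σ(I)` is convex, the
intermediate value theorem then makes its sign constant.
-/

open Matrix

def logMean (x y : ℝ) : ℝ := if x = y then x else (x - y) / (Real.log x - Real.log y)

lemma logMean_pos {x y : ℝ} (hx : 0 < x) (hy : 0 < y) : 0 < logMean x y := by
  unfold logMean
  split_ifs with h
  · exact hx
  · rcases lt_or_gt_of_ne h with h | h
    · exact div_pos_of_neg_of_neg (by linarith) (by linarith [Real.log_lt_log hx h])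
    · exact div_pos (by linarith) (by linarith [Real.log_lt_log hy h])

lemma logMean_mul_log_sub {x y : ℝ} (hx : 0 < x) (hy : 0 < y) :
    logMean x y * (Real.log x - Real.log y) = x - y := by
  unfold logMean
  split_ifs with h
  · simp [h]
  · exact div_mul_cancel₀ _ (sub_ne_zero.2 fun h' => h (Real.log_injOn_pos hx hy h'))

lemma _root_.Real.sign_mul_of_pos {c : ℝ} (hc : 0 < c) (x : ℝ) :
    Real.sign (c * x) = Real.sign x := by
  simp only [Real.sign, mul_neg_iff, mul_pos_iff_of_pos_left hc, hc, hc.not_gt, true_and,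
    false_and, or_false]

lemma _root_.Real.sign_add_of_sign_eq {x y a b : ℝ} (hxy : Real.sign x = Real.sign y) (ha : 0 ≤ a)
    (hb : 0 ≤ b) (hab : a + b = 1) : Real.sign (a * x + b * y) = Real.sign x := by
  rcases lt_trichotomy x 0 with hx | rfl | hx
  · have hy : y < 0 := by
      rw [Real.sign_of_neg hx, Real.sign] at hxy
      split_ifs at hxy <;> first | assumption | norm_num at hxy
    rw [Real.sign_of_neg hx, Real.sign_of_neg
      (show a * x + b * y < 0 from convex_Iio (0 : ℝ) hx hy ha hb hab)]
  · rw [Real.sign_zero, eq_comm, Real.sign_eq_zero_iff] at hxy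
    simp [hxy]
  · have hy : 0 < y := by
      rw [Real.sign_of_pos hx, Real.sign] at hxy
      split_ifs at hxy <;> first | assumption | norm_num at hxy
    rw [Real.sign_of_pos hx, Real.sign_of_pos
      (show 0 < a * x + b * y from convex_Ioi (0 : ℝ) hx hy ha hb hab)]

lemma InSigma.rescale {I v : Fin m → Fin n → ℝ} (hv : InSigma I v) {α : Fin m → ℝ}
    {β : Fin n → ℝ} (hα : ∀ r, 0 < α r) (hβ : ∀ j, 0 < β j) :
    InSigma I fun r j => α r * v r j * β j := fun r j => by
  change Real.sign (α r * v r j * β j) = I r j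
  rw [mul_comm, ← mul_assoc, Real.sign_mul_of_pos (mul_pos (hβ j) (hα r)), hv r j]

lemma convex_setOf_inSigma (I : Fin m → Fin n → ℝ) : Convex ℝ {v | InSigma I v} :=
  fun _ hv _ hw _ _ ha hb hab r j => by
    simpa [hv r j] using Real.sign_add_of_sign_eq ((hv r j).trans (hw r j).symm) ha hb hab

lemma _root_.IsPreconnected.sign_eq_of_ne_zero {X : Type*} [TopologicalSpace X] {S : Set X}
    (hS : IsPreconnected S) {f : X → ℝ} (hf : ContinuousOn f S) (hf0 : ∀ x ∈ S, f x ≠ 0)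
    {a b : X} (ha : a ∈ S) (hb : b ∈ S) : Real.sign (f a) = Real.sign (f b) := by
  rcases (hf0 a ha).lt_or_gt with h₁ | h₁ <;> rcases (hf0 b hb).lt_or_gt with h₂ | h₂
  · rw [Real.sign_of_neg h₁, Real.sign_of_neg h₂]
  · obtain ⟨c, hc, hc0⟩ := hS.intermediate_value ha hb hf ⟨h₁.le, h₂.le⟩
    exact absurd hc0 (hf0 c hc)
  · obtain ⟨c, hc, hc0⟩ := hS.intermediate_value hb ha hf ⟨h₂.le, h₁.le⟩
    exact absurd hc0 (hf0 c hc)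
  · rw [Real.sign_of_pos h₁, Real.sign_of_pos h₂]

lemma orthComp_eq_orthogonal (F : Submodule ℝ (Fin n → ℝ)) :
    orthComp F = (toBilin' (1 : Matrix (Fin n) (Fin n) ℝ)).orthogonal F := by
  ext w
  simp [orthComp, LinearMap.BilinForm.mem_orthogonal_iff, toBilin'_apply', dotProduct, mul_comm]

lemma orthComp_orthComp (F : Submodule ℝ (Fin n → ℝ)) : orthComp (orthComp F) = F := by
  rw [orthComp_eq_orthogonal, orthComp_eq_orthogonal]
  refine LinearMap.BilinForm.orthogonal_orthogonal ?_ (fun x y h => ?_) F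
  · exact (nondegenerate_of_det_ne_zero (by simp)).toBilin'
  · simpa [toBilin'_apply', dotProduct_comm] using h

namespace IsReducedBasis

variable {d : ℕ} {F : Submodule ℝ (Fin n → ℝ)} {ω : Fin d → Fin n → ℝ}

lemma le (hω : IsReducedBasis d F ω) : d ≤ n := by
  simpa using hω.2.2.1.fintype_card_le_finrank

lemma mem_of_forall_dotProduct_eq_zero (hω : IsReducedBasis d F ω) {x : Fin n → ℝ}
    (hx : ∀ i, ω i ⬝ᵥ x = 0) : x ∈ F := by
  rw [← orthComp_orthComp F, ← hω.2.1]
  intro w hw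
  have : Submodule.span ℝ (Set.range ω) ≤ LinearMap.ker (dotProductEquiv ℝ (Fin n) x) :=
    Submodule.span_le.2 <| Set.range_subset_iff.2 fun i => by
      simpa [dotProduct_comm] using hx i
  simpa [dotProduct] using this hw

lemma eq_zero_of_mem (hω : IsReducedBasis d F ω) {x : Fin n → ℝ} (hx : x ∈ F)
    (hbot : ∀ i : Fin n, d ≤ i → x i = 0) : x = 0 := by
  funext i
  by_cases hi : (i : ℕ) < d
  · have hdot := hω.1 ⟨i, hi⟩ x hx
    rwa [Finset.sum_eq_single i ?_ (by simp), hω.2.2.2.1 _ _ rfl, one_mul] at hdot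
    intro j _ hji
    by_cases hj : (j : ℕ) < d
    · rw [hω.2.2.2.2 _ j hj (Fin.val_ne_of_ne hji), zero_mul]
    · rw [hbot j (not_lt.1 hj), mul_zero]
  · exact hbot i (not_lt.1 hi)

end IsReducedBasis

section Mt

variable {d : ℕ} {y y' : Fin m → Fin n → ℝ} {ω : Fin d → Fin n → ℝ}

lemma stoich_mulVec_mem_stoichSpan (w : Fin m → ℝ) : stoich y y' *ᵥ w ∈ stoichSpan y y' := by
  have : stoich y y' *ᵥ w = ∑ r, w r • fun i => y' r i - y r i := by
    ext i
    simp [stoich, mulVec, dotProduct, Finset.sum_apply, mul_comm]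
  rw [this]
  exact Submodule.sum_mem _ fun r _ => Submodule.smul_mem _ _ (Submodule.subset_span ⟨r, rfl⟩)

lemma Mt_mulVec_apply (v : Fin m → Fin n → ℝ) (ν : Fin n → ℝ) (i : Fin n) :
    (Mt y y' d ω v *ᵥ ν) i =
      if h : (i : ℕ) < d then ω ⟨i, h⟩ ⬝ᵥ ν else (stoich y y' *ᵥ (Zmat v *ᵥ ν)) i := by
  rw [mulVec_mulVec]
  split_ifs with h <;> simp [Mt, tildeMat, mulVec, h]

lemma Mt_mulVec_eq_zero_iff (hω : IsReducedBasis d (stoichSpan y y') ω)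
    (v : Fin m → Fin n → ℝ) (ν : Fin n → ℝ) :
    Mt y y' d ω v *ᵥ ν = 0 ↔ ν ∈ stoichSpan y y' ∧ stoich y y' *ᵥ (Zmat v *ᵥ ν) = 0 := by
  constructor
  · intro h
    refine ⟨hω.mem_of_forall_dotProduct_eq_zero fun k => ?_,
      hω.eq_zero_of_mem (stoich_mulVec_mem_stoichSpan _) fun i hi => ?_⟩
    · simpa [Mt_mulVec_apply] using congrFun h ⟨k, k.2.trans_le hω.le⟩
    · simpa [Mt_mulVec_apply, not_lt.2 hi] using congrFun h i
  · rintro ⟨hν, h0⟩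
    funext i
    rw [Mt_mulVec_apply]
    split_ifs
    · exact hω.1 _ ν hν
    · simp [h0]

lemma det_Mt_eq_zero_iff (hω : IsReducedBasis d (stoichSpan y y') ω) (v : Fin m → Fin n → ℝ) :
    (Mt y y' d ω v).det = 0 ↔
      ∃ ν ≠ 0, ν ∈ stoichSpan y y' ∧ stoich y y' *ᵥ (Zmat v *ᵥ ν) = 0 := by
  simp only [← exists_mulVec_eq_zero_iff, Mt_mulVec_eq_zero_iff hω]

lemma continuous_det_Mt : Continuous fun v => (Mt y y' d ω v).det := by
  refine Continuous.matrix_det (continuous_matrix fun i j => ?_)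
  simp only [Mt, tildeMat, of_apply]
  split_ifs
  · exact continuous_const
  · simp only [mul_apply, Zmat, of_apply]
    fun_prop

lemma signedDet_of_det_ne_zero {I : Fin m → Fin n → ℝ}
    (hdet : ∀ v, InSigma I v → (Mt y y' d ω v).det ≠ 0) : SignedDet y y' d ω I :=
  fun _ _ hv hw => (convex_setOf_inSigma I).isPreconnected.sign_eq_of_ne_zero
    continuous_det_Mt.continuousOn hdet hv hw

end Mt

section PowerLaw

variable {y y' : Fin m → Fin n → ℝ}

lemma plf_eq_stoich_mulVec (κ : Fin m → ℝ) (v : Fin m → Fin n → ℝ) (c : Fin n → ℝ) :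
    plf y y' κ v c = stoich y y' *ᵥ fun r => κ r * ∏ j, c j ^ v r j := by
  ext i
  simp [plf, stoich, mulVec, dotProduct, mul_comm]

lemma prod_rpow_pos {c : Fin n → ℝ} (hc : Pos c) (w : Fin n → ℝ) : 0 < ∏ j, c j ^ w j :=
  Finset.prod_pos fun j _ => Real.rpow_pos_of_pos (hc j) _

lemma log_prod_rpow {c : Fin n → ℝ} (hc : Pos c) (w : Fin n → ℝ) :
    Real.log (∏ j, c j ^ w j) = ∑ j, w j * Real.log (c j) := by
  rw [Real.log_prod fun j _ => (Real.rpow_pos_of_pos (hc j) _).ne']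
  exact Finset.sum_congr rfl fun j _ => Real.log_rpow (hc j) _

lemma plf_sub_plf (κ : Fin m → ℝ) (v : Fin m → Fin n → ℝ) {a b : Fin n → ℝ} (ha : Pos a)
    (hb : Pos b) :
    plf y y' κ v a - plf y y' κ v b = stoich y y' *ᵥ fun r =>
      κ r * logMean (∏ j, a j ^ v r j) (∏ j, b j ^ v r j) *
        (Zmat v *ᵥ fun j => Real.log (a j) - Real.log (b j)) r := by
  rw [plf_eq_stoich_mulVec, plf_eq_stoich_mulVec, ← mulVec_sub]
  congr 1
  ext r
  rw [Pi.sub_apply, ← mul_sub, ← logMean_mul_log_sub (prod_rpow_pos ha _) (prod_rpow_pos hb _),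
    log_prod_rpow ha, log_prod_rpow hb, ← Finset.sum_sub_distrib]
  simp [Zmat, mulVec, dotProduct, mul_sub, mul_assoc]

lemma Zmat_rescale_mulVec (α : Fin m → ℝ) (v : Fin m → Fin n → ℝ) (β μ : Fin n → ℝ) :
    Zmat (fun r j => α r * v r j * β j) *ᵥ μ = fun r => α r * (Zmat v *ᵥ fun j => β j * μ j) r := by
  ext r
  simp [Zmat, mulVec, dotProduct, Finset.mul_sum, mul_assoc]

end PowerLaw

section Injectivity

variable {d : ℕ} {y y' : Fin m → Fin n → ℝ} {ω : Fin d → Fin n → ℝ} {I : Fin m → Fin n → ℝ}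

lemma injOverPL_of_forall_det_ne_zero (hω : IsReducedBasis d (stoichSpan y y') ω)
    (hdet : ∀ v, InSigma I v → (Mt y y' d ω v).det ≠ 0) {v : Fin m → Fin n → ℝ}
    (hv : InSigma I v) : InjOverPL y y' v := by
  intro κ hκ a b ha hb hab hΓ hplf
  set L : Fin n → ℝ := fun j => logMean (a j) (b j)
  set α : Fin m → ℝ := fun r => κ r * logMean (∏ j, a j ^ v r j) (∏ j, b j ^ v r j)
  have hL : ∀ j, 0 < L j := fun j => logMean_pos (ha j) (hb j)
  have hα : ∀ r, 0 < α r := fun r =>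
    mul_pos (hκ r) (logMean_pos (prod_rpow_pos ha _) (prod_rpow_pos hb _))
  have hsub : a - b = fun j => L j * (Real.log (a j) - Real.log (b j)) :=
    funext fun j => (logMean_mul_log_sub (ha j) (hb j)).symm
  -- rescaling the columns of `v` by `L⁻¹` turns `log a - log b` into `a - b`
  refine hdet _ (hv.rescale hα fun j => inv_pos.2 (hL j)) <|
    (det_Mt_eq_zero_iff hω _).2 ⟨a - b, sub_ne_zero.2 hab, hΓ, ?_⟩
  rw [Zmat_rescale_mulVec, hsub]
  simp only [inv_mul_cancel_left₀ (hL _).ne']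
  rw [← plf_sub_plf κ v ha hb, hplf, sub_self]

lemma exists_not_injOverPL_of_det_eq_zero (hω : IsReducedBasis d (stoichSpan y y') ω)
    {v : Fin m → Fin n → ℝ} (hv : InSigma I v) (hdet : (Mt y y' d ω v).det = 0) :
    ∃ v', InSigma I v' ∧ ¬ InjOverPL y y' v' := by
  obtain ⟨ν, hν0, hνΓ, hker⟩ := (det_Mt_eq_zero_iff hω v).1 hdet
  set b : Fin n → ℝ := fun j => |ν j| + 1
  set a : Fin n → ℝ := b + ν
  have hb : Pos b := fun j => by positivity
  have ha : Pos a := fun j => by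
    simp only [a, b, Pi.add_apply]
    linarith [neg_abs_le (ν j)]
  set L : Fin n → ℝ := fun j => logMean (a j) (b j)
  have hL : ∀ j, 0 < L j := fun j => logMean_pos (ha j) (hb j)
  set v' : Fin m → Fin n → ℝ := fun r j => 1 * v r j * L j
  -- with these rate constants the power-law rates of `a` and `b` differ by exactly `Z(v) ν`
  set κ : Fin m → ℝ := fun r => (logMean (∏ j, a j ^ v' r j) (∏ j, b j ^ v' r j))⁻¹
  have hκΛ : ∀ r, κ r * logMean (∏ j, a j ^ v' r j) (∏ j, b j ^ v' r j) = 1 := fun r =>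
    inv_mul_cancel₀ (logMean_pos (prod_rpow_pos ha _) (prod_rpow_pos hb _)).ne'
  have hκ : ∀ r, 0 < κ r := fun r =>
    inv_pos.2 (logMean_pos (prod_rpow_pos ha _) (prod_rpow_pos hb _))
  have hab : a - b = ν := add_sub_cancel_left b ν
  refine ⟨v', hv.rescale (fun _ => one_pos) hL, fun hinj =>
    hinj κ hκ a b ha hb (sub_ne_zero.1 (hab ▸ hν0)) (hab ▸ hνΓ) (sub_eq_zero.1 ?_)⟩
  rw [plf_sub_plf κ v' ha hb, ← hker, Zmat_rescale_mulVec]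
  congr 1
  ext r
  simp only [hκΛ, one_mul, L, logMean_mul_log_sub (ha _) (hb _)]
  rw [← hab]
  rfl

end Injectivity

theorem stmt7_general {n m : ℕ} (d : ℕ)
    (y y' : Fin m → Fin n → ℝ)
    (ω : Fin d → Fin n → ℝ)
    (hω : IsReducedBasis d (stoichSpan y y') ω)
    (I : Fin m → Fin n → ℝ) :
    (∀ v, InSigma I v → InjOverPL y y' v) ↔ IsSNS y y' d ω I := by
  have hSNS : IsSNS y y' d ω I ↔ ∀ v, InSigma I v → (Mt y y' d ω v).det ≠ 0 :=
    ⟨And.right, fun h => ⟨signedDet_of_det_ne_zero h, h⟩⟩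
  rw [hSNS]
  refine ⟨fun hinj v hv hdet => ?_, fun hdet v hv => injOverPL_of_forall_det_ne_zero hω hdet hv⟩
  obtain ⟨v', hv', hnot⟩ := exists_not_injOverPL_of_det_eq_zero hω hv hdet
  exact hnot (hinj v' hv')

/-- Proposition `openpos2`. -/
theorem stmt7 {n m s : ℕ} (d : ℕ) (hd : d = n - s)
    (y y' : Fin m → Fin n → ℝ)
    (hs : Module.finrank ℝ (stoichSpan y y') = s)
    (ω : Fin d → Fin n → ℝ)
    (hω : IsReducedBasis d (stoichSpan y y') ω)
    (I : Fin m → Fin n → ℝ) (hI : IsInfluence I) :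
    (∀ v, InSigma I v → InjOverPL y y' v) ↔ IsSNS y y' d ω I :=
  stmt7_general d y y' ω hω I

end CRN
end
end

section
/- Let N be a network with influence specification I. If N is injective over K_d(N,I) — i.e., for every kinetics K differentiable with respect to I and every pair of distinct a, b ∈ ℝ^n_{>0} with a − b ∈ Γ one has f_K(a) ≠ f_K(b) — then N cannot have positive degenerate steady states: for every K ∈ K_d(N,I) and every c ∈ ℝ^n_{>0} with f_K(c) = 0, one has ker(J_c(f_K)) ∩ Γ = {0}. -/
/-!
Let `σ ∈ ker J_c ∩ Γ` be nonzero and `a = c + tσ` with `t > 0` small, so that `a` is positive.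
Writing `D` for the matrix of partial derivatives of the rates at `c`, we have `J_c = A D`.
Any matrix with the sign pattern of `I` is the secant `K'(a) - K'(c) = D (a - c)` of some
kinetics `K' ∈ K_d(N, I)`: take `K'_r(x) = C_r + ∑ⱼ D_rj λⱼ arctan xⱼ`, where `λⱼ > 0` rescales
`arctan aⱼ - arctan cⱼ` to `aⱼ - cⱼ`. Then `f_{K'}(a) - f_{K'}(c) = A D (tσ) = t J_c σ = 0`,
contradicting injectivity.
-/

noncomputable section

open Real Filter Topology Matrix

lemma exists_pos_forall_add_smul_pos {ι : Type*} [Finite ι] {c : ι → ℝ} (hc : ∀ i, 0 < c i)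
    (σ : ι → ℝ) : ∃ t : ℝ, 0 < t ∧ ∀ i, 0 < (c + t • σ) i := by
  have hnear : ∀ᶠ t in 𝓝[>] (0 : ℝ), ∀ i, 0 < (c + t • σ) i := by
    refine eventually_all.2 fun i => ?_
    have hcont : Tendsto (fun t : ℝ => c i + t * σ i) (𝓝[>] 0) (𝓝 (c i)) := by
      simpa using ((by fun_prop : Continuous fun t : ℝ => c i + t * σ i).tendsto 0).mono_left
        nhdsWithin_le_nhds
    exact hcont.eventually (lt_mem_nhds (hc i))
  obtain ⟨t, hpos, ht⟩ := (hnear.and self_mem_nhdsWithin).exists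
  exact ⟨t, ht, hpos⟩

lemma StrictMono.exists_pos_mul_sub_eq {f : ℝ → ℝ} (hf : StrictMono f) (x y : ℝ) :
    ∃ l, 0 < l ∧ l * (f x - f y) = x - y := by
  rcases lt_trichotomy x y with hxy | rfl | hxy
  · have hf' : f x - f y < 0 := sub_neg.2 (hf hxy)
    exact ⟨(x - y) / (f x - f y), div_pos_of_neg_of_neg (sub_neg.2 hxy) hf',
      div_mul_cancel₀ _ hf'.ne⟩
  · exact ⟨1, one_pos, by simp⟩
  · have hf' : 0 < f x - f y := sub_pos.2 (hf hxy)
    exact ⟨(x - y) / (f x - f y), div_pos (sub_pos.2 hxy) hf', div_mul_cancel₀ _ hf'.ne'⟩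

lemma Real.sign_mul_of_pos_s14 {x p : ℝ} (hp : 0 < p) : Real.sign (x * p) = Real.sign x := by
  rcases lt_trichotomy x 0 with hx | rfl | hx
  · rw [Real.sign_of_neg (mul_neg_of_neg_of_pos hx hp), Real.sign_of_neg hx]
  · simp
  · rw [Real.sign_of_pos (mul_pos hx hp), Real.sign_of_pos hx]

namespace CRN

variable {n m : ℕ}

/-- The constant term makes the rate positive, since `|arctan| < π / 2`. -/
def arctanRate {ι : Type*} [Fintype ι] (E x : ι → ℝ) : ℝ :=
  1 + ∑ i, (|E i| * (π / 2) + E i * arctan (x i))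

section arctanRate

variable {ι : Type*} [Fintype ι]

lemma arctanRate_pos (E x : ι → ℝ) : 0 < arctanRate E x := by
  refine add_pos_of_pos_of_nonneg one_pos (Finset.sum_nonneg fun i _ => ?_)
  rcases le_total 0 (E i) with hE | hE
  · rw [abs_of_nonneg hE]
    nlinarith [neg_pi_div_two_lt_arctan (x i)]
  · rw [abs_of_nonpos hE]
    nlinarith [arctan_lt_pi_div_two (x i)]

lemma continuous_arctanRate (E : ι → ℝ) : Continuous (arctanRate E) := by
  unfold arctanRate
  fun_prop

lemma hasFDerivAt_arctanRate (E x : ι → ℝ) :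
    HasFDerivAt (arctanRate E)
      (∑ i, (E i * (1 / (1 + x i ^ 2))) •
        ContinuousLinearMap.proj (R := ℝ) (φ := fun _ : ι => ℝ) i) x := by
  refine (HasFDerivAt.fun_sum fun i _ => ?_).const_add 1
  have hi := ((hasDerivAt_arctan (x i)).comp_hasFDerivAt x
    (hasFDerivAt_apply (𝕜 := ℝ) (F' := fun _ : ι => ℝ) i x)).const_mul (E i)
  simpa [smul_smul] using hi.const_add (|E i| * (π / 2))

lemma fderiv_arctanRate_single [DecidableEq ι] (E x : ι → ℝ) (j : ι) :
    fderiv ℝ (arctanRate E) x (Pi.single j 1) = E j * (1 / (1 + x j ^ 2)) := by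
  rw [(hasFDerivAt_arctanRate E x).fderiv]
  simp [Pi.single_apply]

lemma arctanRate_sub (E a c : ι → ℝ) :
    arctanRate E a - arctanRate E c = ∑ j, E j * (arctan (a j) - arctan (c j)) := by
  rw [arctanRate, arctanRate, add_sub_add_left_eq_sub, ← Finset.sum_sub_distrib]
  exact Finset.sum_congr rfl fun j _ => by ring

end arctanRate

theorem exists_diffWrt_rate_sub_eq_mulVec {I : Fin m → Fin n → ℝ}
    (D : Matrix (Fin m) (Fin n) ℝ) (hD : ∀ r j, Real.sign (D r j) = I r j) (a c : Fin n → ℝ) :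
    ∃ K : Fin m → (Fin n → ℝ) → ℝ,
      KinNonneg {x | ∀ i, 0 < x i} K ∧ DiffWrt {x | ∀ i, 0 < x i} K I ∧
      ((fun r => K r a) - fun r => K r c) = D *ᵥ (a - c) := by
  choose l hl_pos hl using fun j => arctan_strictMono.exists_pos_mul_sub_eq (a j) (c j)
  refine ⟨fun r => arctanRate fun j => D r j * l j, fun r x _ => (arctanRate_pos _ x).le,
    ⟨fun x hx r => ⟨fun _ i _ => (hx i).ne', fun _ => arctanRate_pos _ x⟩,
      fun r x _ => (continuous_arctanRate _).continuousWithinAt,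
      fun r x _ => (hasFDerivAt_arctanRate _ x).differentiableAt,
      fun r x _ j => ?_⟩, ?_⟩
  · rw [fderiv_arctanRate_single, mul_assoc,
      Real.sign_mul_of_pos_s14 (mul_pos (hl_pos j) (by positivity)), hD]
  · funext r
    simp only [Pi.sub_apply, arctanRate_sub, Matrix.mulVec, dotProduct, ← hl]
    exact Finset.sum_congr rfl fun j _ => by ring

lemma specForm_eq_mulVec (y y' : Fin m → Fin n → ℝ) (K : Fin m → (Fin n → ℝ) → ℝ)
    (x : Fin n → ℝ) : specForm y y' K x = stoich y y' *ᵥ fun r => K r x := by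
  funext i
  simp only [specForm, Matrix.mulVec, dotProduct, stoich, Matrix.of_apply]
  exact Finset.sum_congr rfl fun r _ => mul_comm _ _

def rateJac (K : Fin m → (Fin n → ℝ) → ℝ) (c : Fin n → ℝ) : Matrix (Fin m) (Fin n) ℝ :=
  Matrix.of fun r j => fderiv ℝ (K r) c (Pi.single j 1)

lemma jac_specForm (y y' : Fin m → Fin n → ℝ) {K : Fin m → (Fin n → ℝ) → ℝ} {c : Fin n → ℝ}
    (hK : ∀ r, DifferentiableAt ℝ (K r) c) :
    jac (specForm y y' K) c = stoich y y' * rateJac K c := by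
  ext i j
  have hi : HasFDerivAt (fun x => specForm y y' K x i)
      (∑ r, (y' r i - y r i) • fderiv ℝ (K r) c) c :=
    HasFDerivAt.fun_sum fun r _ => (hK r).hasFDerivAt.mul_const _
  simp only [jac, Matrix.of_apply, hi.fderiv, Matrix.mul_apply, stoich, rateJac,
    _root_.sum_apply, _root_.smul_apply, smul_eq_mul]

theorem stmt14_general {n m : ℕ}
    (y y' : Fin m → Fin n → ℝ)
    (I : Fin m → Fin n → ℝ)
    (hinj : ∀ (Ω : Set (Fin n → ℝ)) (K : Fin m → (Fin n → ℝ) → ℝ),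
      KinDom Ω → KinNonneg Ω K → DiffWrt Ω K I →
      ∀ a b : Fin n → ℝ, (∀ i, 0 < a i) → (∀ i, 0 < b i) → a ≠ b →
        a - b ∈ stoichSpan y y' → specForm y y' K a ≠ specForm y y' K b) :
    ∀ (Ω : Set (Fin n → ℝ)) (K : Fin m → (Fin n → ℝ) → ℝ),
      KinDom Ω → KinNonneg Ω K → DiffWrt Ω K I →
      ∀ c : Fin n → ℝ, (∀ i, 0 < c i) → specForm y y' K c = 0 →
        LinearMap.ker (jac (specForm y y' K) c).mulVecLin ⊓ stoichSpan y y' = ⊥ := by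
  intro Ω K _ _ hK c hc _
  refine (Submodule.eq_bot_iff _).2 fun σ hσ_mem => by_contra fun hσ => ?_
  obtain ⟨hker, hΓ⟩ := Submodule.mem_inf.1 hσ_mem
  have hJσ : jac (specForm y y' K) c *ᵥ σ = 0 := hker
  obtain ⟨t, ht, ha⟩ := exists_pos_forall_add_smul_pos hc σ
  obtain ⟨K', hK'nn, hK', hsecant⟩ := exists_diffWrt_rate_sub_eq_mulVec (rateJac K c)
    (fun r j => hK.2.2.2 r c hc j) (c + t • σ) c
  refine hinj _ K' ⟨subset_rfl, fun x hx i => (hx i).le⟩ hK'nn hK' _ c ha hc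
    (by simpa [ht.ne'] using hσ) (by simpa using Submodule.smul_mem _ t hΓ) ?_
  rw [← sub_eq_zero, specForm_eq_mulVec, specForm_eq_mulVec, ← Matrix.mulVec_sub, hsecant,
    add_sub_cancel_left, Matrix.mulVec_mulVec, ← jac_specForm y y' fun r => hK.2.2.1 r c hc,
    Matrix.mulVec_smul, hJσ, smul_zero]

/-- Corollary: injectivity over `K_d(N,I)` precludes positive
degenerate steady states. -/
theorem stmt14 {n m : ℕ}
    (y y' : Fin m → Fin n → ℝ)
    (I : Fin m → Fin n → ℝ) (hI : IsInfluence I)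
    (hinj : ∀ (Ω : Set (Fin n → ℝ)) (K : Fin m → (Fin n → ℝ) → ℝ),
      KinDom Ω → KinNonneg Ω K → DiffWrt Ω K I →
      ∀ a b : Fin n → ℝ, (∀ i, 0 < a i) → (∀ i, 0 < b i) → a ≠ b →
        a - b ∈ stoichSpan y y' → specForm y y' K a ≠ specForm y y' K b) :
    ∀ (Ω : Set (Fin n → ℝ)) (K : Fin m → (Fin n → ℝ) → ℝ),
      KinDom Ω → KinNonneg Ω K → DiffWrt Ω K I →
      ∀ c : Fin n → ℝ, (∀ i, 0 < c i) → specForm y y' K c = 0 →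
        LinearMap.ker (jac (specForm y y' K) c).mulVecLin ⊓ stoichSpan y y' = ⊥ :=
  stmt14_general y y' I hinj

end CRN
end
end

section
/- Let N be a network with influence specification I satisfying supp(y_r) ⊆ I_r^+ ∪ I_r^- for all reactions r. Then a power-law kinetics (κ,v) is weakly monotonic with respect to I if and only if Ĩ ≼ I(v) ≼ I; equivalently, the set of power-law kinetics that are weakly monotonic with respect to I equals the union over all influence specifications I' with Ĩ ≼ I' ≼ I of the sets of power-law kinetics (κ,v) with I(v) = I'. -/
noncomputable section

namespace CRN

variable {n m : ℕ}

/-- The maximal domain of definition of a power-law kinetics with kinetic order `v`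
inside the nonnegative orthant. -/
def plDom (v : Fin m → Fin n → ℝ) : Set (Fin n → ℝ) :=
  {c | (∀ i, 0 ≤ c i) ∧ ∀ i, (∃ r, v r i < 0) → 0 < c i}

/-- The influence specification `Ĩ`: `I` restricted to the support of the reactant
complexes. -/
def restrInf (y : Fin m → Fin n → ℝ) (I : Fin m → Fin n → ℝ) : Fin m → Fin n → ℝ :=
  fun r i => if y r i ≠ 0 then I r i else 0

/-! Auxiliary lemmas for `stmt16`. -/

lemma sign_ne_one_imp {x : ℝ} (h : Real.sign x ≠ 1) : x ≤ 0 := by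
  by_contra hx
  exact h (Real.sign_of_pos (lt_of_not_ge hx))

lemma sign_ne_neg_one_imp {x : ℝ} (h : Real.sign x ≠ -1) : 0 ≤ x := by
  by_contra hx
  exact h (Real.sign_of_neg (lt_of_not_ge hx))

lemma prod_update_rpow {n : ℕ} (v : Fin n → ℝ) (i : Fin n) (t : ℝ) :
    ∏ j, Function.update (fun _ : Fin n => (1:ℝ)) i t j ^ v j = t ^ v i := by
  rw [Finset.prod_eq_single_of_mem i (Finset.mem_univ i)]
  · rw [Function.update_self]
  · intro j _ hj
    rw [Function.update_of_ne hj, Real.one_rpow]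

lemma prod_one_rpow {n : ℕ} (v : Fin n → ℝ) : ∏ j, (1:ℝ) ^ v j = 1 := by
  simp [Real.one_rpow]

lemma base_pos_of_rpow_pos {x z : ℝ} (hx : 0 ≤ x) (hz : z ≠ 0) (h : 0 < x ^ z) : 0 < x := by
  rcases hx.eq_or_lt with h0 | h0
  · rw [← h0, Real.zero_rpow hz] at h
    exact absurd h (lt_irrefl _)
  · exact h0

/-- Lemma `gma-influence`. -/
theorem stmt16 {n m : ℕ}
    (y y' : Fin m → Fin n → ℝ)
    (hy : ∀ r i, 0 ≤ y r i) (hy' : ∀ r i, 0 ≤ y' r i)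
    (I : Fin m → Fin n → ℝ) (hI : IsInfluence I)
    (hsupp : ∀ r i, y r i ≠ 0 → I r i ≠ 0)
    (κ : Fin m → ℝ) (hκ : ∀ r, 0 < κ r)
    (v : Fin m → Fin n → ℝ) :
    WeaklyMonotonic y (plDom v) (powerLaw κ v) I ↔
      (Preceq (restrInf y I) (infOf v) ∧ Preceq (infOf v) I) := by
  classical
  constructor
  · -- forward direction
    intro hWM
    -- set up test vectors
    have hmem : ∀ c : Fin n → ℝ, (∀ i, 0 < c i) → c ∈ plDom v :=
      fun c hc => ⟨fun i => (hc i).le, fun i _ => hc i⟩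
    have hupos : ∀ (i : Fin n) (j : Fin n),
        0 < Function.update (fun _ : Fin n => (1:ℝ)) i 2 j := by
      intro i j
      by_cases h : j = i
      · subst h; rw [Function.update_self]; norm_num
      · rw [Function.update_of_ne h]; norm_num
    have hno : ∀ a b : Fin n → ℝ, (∀ i, 0 < b i) → NonOverlap I a b :=
      fun a b hb r _ i _ => (hb i).ne'
    -- Key fact A : 0 < v r i → I r i = 1
    have hA : ∀ r i, 0 < v r i → I r i = 1 := by
      intro r i hv
      set a := Function.update (fun _ : Fin n => (1:ℝ)) i 2 with ha_def
      have hKa : powerLaw κ v r a = κ r * 2 ^ v r i := by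
        unfold powerLaw; rw [prod_update_rpow]
      have hKb : powerLaw κ v r (fun _ => (1:ℝ)) = κ r * 1 := by
        unfold powerLaw; rw [prod_one_rpow]
      have hlt : powerLaw κ v r (fun _ => (1:ℝ)) < powerLaw κ v r a := by
        rw [hKa, hKb]
        refine mul_lt_mul_of_pos_left ?_ (hκ r)
        exact (Real.one_lt_rpow_iff_of_pos (by norm_num)).mpr (Or.inl ⟨by norm_num, hv⟩)
      obtain ⟨i', h1, h2⟩ :=
        (hWM a (hmem a (hupos i)) (fun _ => (1:ℝ)) (hmem _ (fun _ => one_pos))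
          (hno a _ (fun _ => one_pos)) r).1 hlt
      have hii : i' = i := by
        by_contra hne
        rw [ha_def, Function.update_of_ne hne] at h1
        simp [Real.sign_zero] at h1
        exact h2 h1.symm
      subst hii
      rw [ha_def, Function.update_self] at h1
      norm_num at h1
      exact h1.symm
    -- Key fact B : v r i < 0 → I r i = -1
    have hB : ∀ r i, v r i < 0 → I r i = -1 := by
      intro r i hv
      set a := Function.update (fun _ : Fin n => (1:ℝ)) i 2 with ha_def
      have hKa : powerLaw κ v r a = κ r * 2 ^ v r i := by
        unfold powerLaw; rw [prod_update_rpow]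
      have hKb : powerLaw κ v r (fun _ => (1:ℝ)) = κ r * 1 := by
        unfold powerLaw; rw [prod_one_rpow]
      have hlt : powerLaw κ v r a < powerLaw κ v r (fun _ => (1:ℝ)) := by
        rw [hKa, hKb]
        refine mul_lt_mul_of_pos_left ?_ (hκ r)
        exact Real.rpow_lt_one_of_one_lt_of_neg (by norm_num) hv
      obtain ⟨i', h1, h2⟩ :=
        (hWM (fun _ => (1:ℝ)) (hmem _ (fun _ => one_pos)) a (hmem a (hupos i))
          (hno _ a (hupos i)) r).1 hlt
      have hii : i' = i := by
        by_contra hne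
        rw [ha_def, Function.update_of_ne hne] at h1
        simp [Real.sign_zero] at h1
        exact h2 h1.symm
      subst hii
      rw [ha_def, Function.update_self] at h1
      norm_num at h1
      rw [← h1]
      exact Real.sign_of_neg (by norm_num)
    -- Key fact C : y r i ≠ 0 → v r i ≠ 0
    have hC : ∀ r i, y r i ≠ 0 → v r i ≠ 0 := by
      intro r i hyri hv0
      set a := Function.update (fun _ : Fin n => (1:ℝ)) i 2 with ha_def
      have hKa : powerLaw κ v r a = κ r * 2 ^ v r i := by
        unfold powerLaw; rw [prod_update_rpow]
      have hKb : powerLaw κ v r (fun _ => (1:ℝ)) = κ r * 1 := by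
        unfold powerLaw; rw [prod_one_rpow]
      have heq : powerLaw κ v r a = powerLaw κ v r (fun _ => (1:ℝ)) := by
        rw [hKa, hKb, hv0, Real.rpow_zero]
      have := (hWM a (hmem a (hupos i)) (fun _ => (1:ℝ)) (hmem _ (fun _ => one_pos))
          (hno a _ (fun _ => one_pos)) r).2 heq
      rcases this with h | ⟨i', j', hne, h1, h2, h3, h4⟩
      · have := h i hyri
        rw [ha_def, Function.update_self] at this
        norm_num at this
      · have hii : i' = i := by
          by_contra hnei
          rw [ha_def, Function.update_of_ne hnei] at h1
          simp [Real.sign_zero] at h1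
          exact h2 h1.symm
        have hjj : j' = i := by
          by_contra hnej
          rw [ha_def, Function.update_of_ne hnej] at h3
          simp [Real.sign_zero] at h3
          exact h4 (by linarith [h3])
        exact hne (hii.trans hjj.symm)
    refine ⟨fun r i => ⟨?_, ?_⟩, fun r i => ⟨?_, ?_⟩⟩
    · intro h
      unfold restrInf at h
      split_ifs at h with hy0
      · have hv : v r i ≠ 0 := hC r i hy0
        rcases lt_trichotomy (v r i) 0 with hlt | he | hgt
        · rw [hB r i hlt] at h; norm_num at h
        · exact absurd he hv
        · exact (Real.sign_of_pos hgt : infOf v r i = 1)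
      · norm_num at h
    · intro h
      unfold restrInf at h
      split_ifs at h with hy0
      · have hv : v r i ≠ 0 := hC r i hy0
        rcases lt_trichotomy (v r i) 0 with hlt | he | hgt
        · exact (Real.sign_of_neg hlt : infOf v r i = -1)
        · exact absurd he hv
        · rw [hA r i hgt] at h; norm_num at h
      · norm_num at h
    · intro h
      rcases lt_trichotomy (v r i) 0 with hlt | he | hgt
      · rw [show infOf v r i = -1 from Real.sign_of_neg hlt] at h; norm_num at h
      · rw [show infOf v r i = 0 by unfold infOf; rw [he, Real.sign_zero]] at h
        norm_num at h
      · exact hA r i hgt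
    · intro h
      rcases lt_trichotomy (v r i) 0 with hlt | he | hgt
      · exact hB r i hlt
      · rw [show infOf v r i = 0 by unfold infOf; rw [he, Real.sign_zero]] at h
        norm_num at h
      · rw [show infOf v r i = 1 from Real.sign_of_pos hgt] at h; norm_num at h
  · -- reverse direction
    rintro ⟨h1, h2⟩
    have hA : ∀ r i, 0 < v r i → I r i = 1 :=
      fun r i h => (h2 r i).1 (Real.sign_of_pos h)
    have hB : ∀ r i, v r i < 0 → I r i = -1 :=
      fun r i h => (h2 r i).2 (Real.sign_of_neg h)
    have hC : ∀ r i, y r i ≠ 0 → Real.sign (v r i) = I r i := by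
      intro r i hy0
      rcases hI r i with hIn | hI0 | hIp
      · have := (h1 r i).2 (by unfold restrInf; rw [if_pos hy0, hIn])
        rw [hIn]; exact this
      · exact absurd hI0 (hsupp r i hy0)
      · have := (h1 r i).1 (by unfold restrInf; rw [if_pos hy0, hIp])
        rw [hIp]; exact this
    intro a ha b hb hno r
    constructor
    · -- strict inequality clause
      intro hlt
      by_contra hcon
      push_neg at hcon
      have hfact : ∀ j, a j ^ v r j ≤ b j ^ v r j := by
        intro j
        rcases lt_trichotomy (v r j) 0 with hv | hv | hv
        · have hIj : I r j = -1 := hB r j hv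
          have hba : 0 ≤ a j - b j := by
            refine sign_ne_neg_one_imp (fun hs => ?_)
            have := hcon j (by rw [hs, hIj])
            rw [this] at hIj; norm_num at hIj
          exact Real.rpow_le_rpow_of_nonpos (hb.2 j ⟨r, hv⟩) (by linarith) hv.le
        · rw [hv, Real.rpow_zero, Real.rpow_zero]
        · have hIj : I r j = 1 := hA r j hv
          have hab : a j - b j ≤ 0 := by
            refine sign_ne_one_imp (fun hs => ?_)
            have := hcon j (by rw [hs, hIj])
            rw [this] at hIj; norm_num at hIj
          exact Real.rpow_le_rpow (ha.1 j) (by linarith) hv.le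
      have : powerLaw κ v r a ≤ powerLaw κ v r b := by
        unfold powerLaw
        refine mul_le_mul_of_nonneg_left ?_ (hκ r).le
        exact Finset.prod_le_prod (fun j _ => Real.rpow_nonneg (ha.1 j) _)
          (fun j _ => hfact j)
      exact absurd hlt (not_lt.2 this)
    · -- equality clause
      intro heq
      have hprodeq : ∏ j, a j ^ v r j = ∏ j, b j ^ v r j := by
        have : κ r * ∏ j, a j ^ v r j = κ r * ∏ j, b j ^ v r j := heq
        exact mul_left_cancel₀ (hκ r).ne' this
      by_cases hprod : ∏ j, a j ^ v r j = 0
      · -- leads to a contradiction via non-overlap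
        exfalso
        obtain ⟨j0, _, hj0⟩ := Finset.prod_eq_zero_iff.mp hprod
        obtain ⟨haj0, hvj0⟩ := (Real.rpow_eq_zero_iff_of_nonneg (ha.1 j0)).mp hj0
        have hvpos : 0 < v r j0 := by
          rcases lt_trichotomy (v r j0) 0 with hv | hv | hv
          · exact absurd haj0 (ha.2 j0 ⟨r, hv⟩).ne'
          · exact absurd hv hvj0
          · exact hv
        have hnp : ¬ PosSupp I r a := fun hp => hp j0 (hA r j0 hvpos) haj0
        have hpb : PosSupp I r b := hno r hnp
        have : ∏ j, b j ^ v r j ≠ 0 := by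
          refine Finset.prod_ne_zero_iff.mpr (fun j _ => ?_)
          rcases lt_trichotomy (v r j) 0 with hv | hv | hv
          · exact (Real.rpow_ne_zero (hb.1 j) hv.ne).mpr (hb.2 j ⟨r, hv⟩).ne'
          · rw [hv, Real.rpow_zero]; norm_num
          · exact (Real.rpow_ne_zero (hb.1 j) hv.ne').mpr (hpb j (hA r j hv))
        exact this (hprodeq ▸ hprod)
      · -- all factors positive
        have hfa : ∀ j, 0 < a j ^ v r j := by
          intro j
          rcases (Real.rpow_nonneg (ha.1 j) (v r j)).eq_or_lt with h0 | h0
          · exact absurd h0.symm (Finset.prod_ne_zero_iff.mp hprod j (Finset.mem_univ j))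
          · exact h0
        have hprodb : ∏ j, b j ^ v r j ≠ 0 := fun h => hprod (hprodeq.trans h)
        have hfb : ∀ j, 0 < b j ^ v r j := by
          intro j
          rcases (Real.rpow_nonneg (hb.1 j) (v r j)).eq_or_lt with h0 | h0
          · exact absurd h0.symm (Finset.prod_ne_zero_iff.mp hprodb j (Finset.mem_univ j))
          · exact h0
        by_cases hall : ∀ j, a j ^ v r j = b j ^ v r j
        · left
          intro i hyi
          have hvne : v r i ≠ 0 := by
            intro hv0
            have := hC r i hyi
            rw [hv0, Real.sign_zero] at this
            exact hsupp r i hyi this.symm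
          have hap : 0 < a i := base_pos_of_rpow_pos (ha.1 i) hvne (hfa i)
          have hbp : 0 < b i := base_pos_of_rpow_pos (hb.1 i) hvne (hfb i)
          rcases hvne.lt_or_gt with hv | hv
          · have h1' := (Real.rpow_le_rpow_iff_of_neg hap hbp hv).mp (hall i).le
            have h2' := (Real.rpow_le_rpow_iff_of_neg hbp hap hv).mp (hall i).ge
            linarith
          · have h1' := (Real.rpow_le_rpow_iff (ha.1 i) (hb.1 i) hv).mp (hall i).le
            have h2' := (Real.rpow_le_rpow_iff (hb.1 i) (ha.1 i) hv).mp (hall i).ge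
            linarith
        · right
          -- there exist indices where the factors differ in both directions
          obtain ⟨i0, hi0⟩ := not_forall.mp hall
          have hboth : (∃ iP, b iP ^ v r iP < a iP ^ v r iP) ∧
              (∃ iN, a iN ^ v r iN < b iN ^ v r iN) := by
            constructor
            · by_contra hP
              push_neg at hP
              have : ∏ j, a j ^ v r j < ∏ j, b j ^ v r j := by
                refine Finset.prod_lt_prod (fun j _ => hfa j) (fun j _ => hP j) ?_
                exact ⟨i0, Finset.mem_univ i0, (hP i0).lt_of_ne hi0⟩
              exact absurd hprodeq this.ne
            · by_contra hN
              push_neg at hN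
              have : ∏ j, b j ^ v r j < ∏ j, a j ^ v r j := by
                refine Finset.prod_lt_prod (fun j _ => hfb j) (fun j _ => hN j) ?_
                exact ⟨i0, Finset.mem_univ i0, (hN i0).lt_of_ne (Ne.symm hi0)⟩
              exact absurd hprodeq this.ne'
          obtain ⟨⟨iP, hiP⟩, ⟨iN, hiN⟩⟩ := hboth
          have hne : iP ≠ iN := fun h => absurd hiP (by rw [h]; exact hiN.asymm)
          -- analyze iP
          have hvP : v r iP ≠ 0 := by
            intro hv0; rw [hv0, Real.rpow_zero, Real.rpow_zero] at hiP
            exact absurd hiP (lt_irrefl _)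
          have hapP : 0 < a iP := base_pos_of_rpow_pos (ha.1 iP) hvP (hfa iP)
          have hbpP : 0 < b iP := base_pos_of_rpow_pos (hb.1 iP) hvP (hfb iP)
          have hvN : v r iN ≠ 0 := by
            intro hv0; rw [hv0, Real.rpow_zero, Real.rpow_zero] at hiN
            exact absurd hiN (lt_irrefl _)
          have hapN : 0 < a iN := base_pos_of_rpow_pos (ha.1 iN) hvN (hfa iN)
          have hbpN : 0 < b iN := base_pos_of_rpow_pos (hb.1 iN) hvN (hfb iN)
          refine ⟨iP, iN, hne, ?_, ?_, ?_, ?_⟩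
          · rcases hvP.lt_or_gt with hv | hv
            · have : a iP < b iP := (Real.rpow_lt_rpow_iff_of_neg hbpP hapP hv).mp hiP
              rw [Real.sign_of_neg (by linarith : a iP - b iP < 0), hB r iP hv]
            · have : b iP < a iP := (Real.rpow_lt_rpow_iff (hb.1 iP) (ha.1 iP) hv).mp hiP
              rw [Real.sign_of_pos (by linarith : 0 < a iP - b iP), hA r iP hv]
          · rcases hvP.lt_or_gt with hv | hv
            · rw [hB r iP hv]; norm_num
            · rw [hA r iP hv]; norm_num
          · rcases hvN.lt_or_gt with hv | hv
            · have : b iN < a iN := (Real.rpow_lt_rpow_iff_of_neg hapN hbpN hv).mp hiN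
              rw [Real.sign_of_pos (by linarith : 0 < a iN - b iN), hB r iN hv]
              norm_num
            · have : a iN < b iN := (Real.rpow_lt_rpow_iff (ha.1 iN) (hb.1 iN) hv).mp hiN
              rw [Real.sign_of_neg (by linarith : a iN - b iN < 0), hA r iN hv]
          · rcases hvN.lt_or_gt with hv | hv
            · rw [hB r iN hv]; norm_num
            · rw [hA r iN hv]; norm_num
end CRN
end
end
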